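/- Fix 0 < α < 1, and let X_α be the unique positive real with X_α^α = K_α (1 - X_α). Then every z ∈ C_α satisfies X_α ≤ |z| ≤ α/(1-α), and |z| = α/(1-α) holds only for z = α/(1-α). -/

import Mathlib

/-!
Write `r = |z|`. On `C_α` we have `r^α = K_α |1+z|`. The reverse triangle inequality
`|1+z| ≥ 1 - r` gives `r^α ≥ K_α (1 - r)`, and since `t ↦ t^α - K_α (1 - t)` is strictly
increasing this forces `r ≥ X_α`. At `r = α/(1-α)` one computes `r^α = K_α (1 + r)`, so
`|1+z| = 1 + |z|`: equality in the triangle inequality, hence `z` is a nonnegative real.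
-/

/-- The constant `K_α = α^α (1-α)^(1-α)` for `0 < α < 1`. -/
noncomputable def Kconst (α : ℝ) : ℝ := α ^ α * (1 - α) ^ (1 - α)

/-- The curve `C_α = {z : |z|^α / |1+z| = K_α, |z| ≤ α/(1-α)}`. -/
def curveC (α : ℝ) : Set ℂ :=
  {z : ℂ | ‖z‖ ^ α / ‖1 + z‖ = Kconst α ∧
    ‖z‖ ≤ α / (1 - α)}

theorem Complex.eq_norm_of_norm_one_add {z : ℂ} (h : ‖1 + z‖ = 1 + ‖z‖) : z = ‖z‖ := by
  rw [← norm_one (α := ℂ), norm_add_eq_iff_real] at h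
  simpa [Complex.real_smul, eq_comm] using h

theorem Kconst_pos {α : ℝ} (hα0 : 0 < α) (hα1 : α < 1) : 0 < Kconst α := by
  unfold Kconst
  have : 0 < 1 - α := by linarith
  positivity

theorem div_one_sub_rpow_eq_Kconst_mul {α : ℝ} (hα0 : 0 < α) (hα1 : α < 1) :
    (α / (1 - α)) ^ α = Kconst α * (1 + α / (1 - α)) := by
  have h1α : 0 < 1 - α := by linarith
  rw [Real.div_rpow hα0.le h1α.le, Kconst, Real.rpow_sub h1α, Real.rpow_one,
    show 1 + α / (1 - α) = 1 / (1 - α) by field_simp; ring]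
  have := (Real.rpow_pos_of_pos h1α α).ne'
  field_simp

theorem le_of_mul_one_sub_le_rpow {α K X r : ℝ} (hα0 : 0 < α) (hK : 0 < K) (hr : 0 ≤ r)
    (hX : X ^ α = K * (1 - X)) (h : K * (1 - r) ≤ r ^ α) : X ≤ r := by
  by_contra! hlt
  have := Real.rpow_lt_rpow hr hlt hα0
  nlinarith

theorem norm_rpow_eq_Kconst_mul_of_mem_curveC {α : ℝ} (hα0 : 0 < α) (hα1 : α < 1) {z : ℂ}
    (hz : z ∈ curveC α) : ‖z‖ ^ α = Kconst α * ‖1 + z‖ := by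
  have hK := Kconst_pos hα0 hα1
  obtain ⟨h, -⟩ := hz
  have h1z : ‖1 + z‖ ≠ 0 := by
    rintro h0
    rw [h0, div_zero] at h
    exact hK.ne' h.symm
  rw [← h, div_mul_cancel₀ _ h1z]

theorem curveC_modulus_bounds_general (α : ℝ) (hα0 : 0 < α) (hα1 : α < 1)
    (X : ℝ) (hXeq : X ^ α = Kconst α * (1 - X)) :
    ∀ z ∈ curveC α, X ≤ ‖z‖ ∧ ‖z‖ ≤ α / (1 - α) ∧
      (‖z‖ = α / (1 - α) → z = ((α / (1 - α) : ℝ) : ℂ)) := by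
  intro z hz
  have hK := Kconst_pos hα0 hα1
  have hcurve := norm_rpow_eq_Kconst_mul_of_mem_curveC hα0 hα1 hz
  refine ⟨?_, hz.2, fun hmax => ?_⟩
  · refine le_of_mul_one_sub_le_rpow hα0 hK (norm_nonneg z) hXeq ?_
    rw [hcurve]
    gcongr
    simpa using norm_sub_norm_le (1 : ℂ) (-z)
  · have h1z : ‖1 + z‖ = 1 + ‖z‖ := by
      refine mul_left_cancel₀ hK.ne' ?_
      rw [← hcurve, hmax, div_one_sub_rpow_eq_Kconst_mul hα0 hα1]
    rw [Complex.eq_norm_of_norm_one_add h1z, hmax]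

theorem curveC_modulus_bounds (α : ℝ) (hα0 : 0 < α) (hα1 : α < 1)
    (X : ℝ) (hX0 : 0 < X) (hXeq : X ^ α = Kconst α * (1 - X)) :
    ∀ z ∈ curveC α, X ≤ ‖z‖ ∧ ‖z‖ ≤ α / (1 - α) ∧
      (‖z‖ = α / (1 - α) → z = ((α / (1 - α) : ℝ) : ℂ)) :=
  curveC_modulus_bounds_general α hα0 hα1 X hXeq
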